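/- Let h: [1,∞) → ℝ be continuous and strictly increasing, and let M: [1,∞) → (0,∞) be a function such that r ↦ log M(r) is a convex function of h(r) (i.e. log M = φ ∘ h with φ convex) and M is nondecreasing. Suppose h(r) − log r → 0 as r → ∞, 1 < ρ < R/10, M(ρ) = 1, and M(R)/M(R/2) ≤ 2^d. Set d_R = d·log 2/(h(R) − h(R/2)). Then log M(r) − d_R·h(r) is nonincreasing on [ρ, R/2], and consequently log M(r) ≤ d_R·h(r) for all ρ ≤ r ≤ R/2. -/
import Mathlib


open Filter Real

/-- Abstract three-circle monotonicity: if `log M = φ ∘ h` with `φ` convex, `M` nondecreasing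
and positive, `h` continuous strictly increasing with `h r - log r → 0` and `h ρ ≥ 0`,
`M ρ = 1`, `M R / M (R/2) ≤ 2^d`, then `log M(r) - d_R h(r)` is nonincreasing on `[ρ, R/2]`
and hence `log M(r) ≤ d_R h(r)` there. -/
theorem stmt_3 (h M : ℝ → ℝ)
    (hc : ContinuousOn h (Set.Ici (1:ℝ))) (hm : StrictMonoOn h (Set.Ici (1:ℝ)))
    (hMpos : ∀ r, 1 ≤ r → 0 < M r) (hMmono : MonotoneOn M (Set.Ici (1:ℝ)))
    (hconv : ∃ φ : ℝ → ℝ, ConvexOn ℝ Set.univ φ ∧ ∀ r, 1 ≤ r → Real.log (M r) = φ (h r))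
    (hlim : Tendsto (fun r : ℝ => h r - Real.log r) atTop (nhds 0))
    (ρ R d : ℝ) (hρ : 1 < ρ) (hρR : ρ < R / 10) (hd : 0 < d)
    (hhρ : 0 ≤ h ρ) (hMρ : M ρ = 1)
    (hdouble : M R / M (R / 2) ≤ 2 ^ d) :
    AntitoneOn
        (fun r => Real.log (M r) - d * Real.log 2 / (h R - h (R / 2)) * h r)
        (Set.Icc ρ (R / 2)) ∧
      ∀ r ∈ Set.Icc ρ (R / 2),
        Real.log (M r) ≤ d * Real.log 2 / (h R - h (R / 2)) * h r := by
  obtain ⟨φ, hφ, hφM⟩ := hconv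
  have hR10 : 10 < R := by nlinarith
  have h1ρ : (1:ℝ) ≤ ρ := hρ.le
  have hR2 : (1:ℝ) ≤ R / 2 := by linarith
  have hR1 : (1:ℝ) ≤ R := by linarith
  have hce : h (R / 2) < h R := hm hR2 hR1 (by linarith)
  have hec : 0 < h R - h (R / 2) := by linarith
  have hlog2 : 0 < Real.log 2 := Real.log_pos (by norm_num)
  -- the secant over [R/2, R] is bounded by d log 2
  have hnum : φ (h R) - φ (h (R / 2)) ≤ d * Real.log 2 := by
    have h1 : Real.log (M R) - Real.log (M (R / 2)) ≤ d * Real.log 2 := by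
      have := Real.log_le_log (div_pos (hMpos R hR1) (hMpos _ hR2)) hdouble
      rwa [Real.log_div (hMpos R hR1).ne' (hMpos _ hR2).ne',
        Real.log_rpow (by norm_num)] at this
    rw [← hφM R hR1, ← hφM (R / 2) hR2]; exact h1
  have hdR : 0 ≤ d * Real.log 2 / (h R - h (R / 2)) := by positivity
  have hanti : AntitoneOn
      (fun r => Real.log (M r) - d * Real.log 2 / (h R - h (R / 2)) * h r)
      (Set.Icc ρ (R / 2)) := by
    intro r1 hr1 r2 hr2 hr12
    rcases eq_or_lt_of_le hr12 with rfl | hlt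
    · exact le_refl _
    have h1r1 : (1:ℝ) ≤ r1 := le_trans h1ρ hr1.1
    have h1r2 : (1:ℝ) ≤ r2 := le_trans h1ρ hr2.1
    have hab : h r1 < h r2 := hm h1r1 h1r2 hlt
    have hbR : h r2 < h R := hm h1r2 hR1 (by linarith [hr2.2])
    have haR : h r1 < h R := lt_trans hab hbR
    have hac : h r1 ≤ h (R / 2) := hm.monotoneOn h1r1 hR2 (le_trans hlt.le hr2.2)
    -- slope(h r1, h r2) ≤ slope(h r1, h R)
    have s1 : (φ (h r2) - φ (h r1)) / (h r2 - h r1)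
        ≤ (φ (h R) - φ (h r1)) / (h R - h r1) :=
      hφ.secant_mono trivial trivial trivial hab.ne' haR.ne' hbR.le
    -- slope(h r1, h R) ≤ slope(h (R/2), h R)
    have s2 : (φ (h r1) - φ (h R)) / (h r1 - h R)
        ≤ (φ (h (R / 2)) - φ (h R)) / (h (R / 2) - h R) :=
      hφ.secant_mono trivial trivial trivial haR.ne hce.ne hac
    have e1 : (φ (h r1) - φ (h R)) / (h r1 - h R)
        = (φ (h R) - φ (h r1)) / (h R - h r1) := by
      rw [← neg_div_neg_eq]; ring_nf
    have e2 : (φ (h (R / 2)) - φ (h R)) / (h (R / 2) - h R)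
        = (φ (h R) - φ (h (R / 2))) / (h R - h (R / 2)) := by
      rw [← neg_div_neg_eq]; ring_nf
    rw [e1, e2] at s2
    have s3 : (φ (h r2) - φ (h r1)) / (h r2 - h r1)
        ≤ d * Real.log 2 / (h R - h (R / 2)) := by
      refine le_trans (le_trans s1 s2) ?_
      gcongr
    have hba : 0 < h r2 - h r1 := by linarith
    have s4 : φ (h r2) - φ (h r1)
        ≤ d * Real.log 2 / (h R - h (R / 2)) * (h r2 - h r1) :=
      (div_le_iff₀ hba).mp s3
    simp only
    rw [hφM r1 h1r1, hφM r2 h1r2]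
    nlinarith [s4]
  refine ⟨hanti, fun r hr => ?_⟩
  have h1r : (1:ℝ) ≤ r := le_trans h1ρ hr.1
  have hρmem : ρ ∈ Set.Icc ρ (R / 2) := ⟨le_refl _, by linarith⟩
  have := hanti hρmem hr hr.1
  simp only [hMρ, Real.log_one] at this
  nlinarith [mul_nonneg hdR hhρ]
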